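/- (Instability on the side of positive heat capacity at fixed angular momenta.) Take p = 1 and write X^1 = J (the angular momentum). Let φ : ℝ → E be a C^∞ curve and T, Y : ℝ → ℝ be C^∞ functions such that for every λ, φ(λ) satisfies the first law with temperature T(λ) and potential Y(λ), with T(0) > 0. Suppose the curve has fixed angular momentum, (J∘φ)′(λ) = 0 for all λ, and that there is a C¹ function c : ℝ → ℝ (the heat capacity at constant J) with (S∘φ)′(λ) = (c(λ)/T(λ))·T′(λ) for all λ near 0, satisfying c(0) = 0, T′(0) ≠ 0, and c′(0) > 0. Suppose further that φ′(0) ≠ 0 and there exists a continuous map ũ : ℝ → E with λ·DS_{φ(λ)}(ũ(λ)) = (S∘φ)′(λ) and λ·DJ_{φ(λ)}(ũ(λ)) = 0 for all λ near 0. Then there exists ε > 0 such that for all λ ∈ (0, ε) (the side of the turning point on which c(λ) > 0), the vector û(λ) := φ′(λ) − λ·ũ(λ) satisfies DM_{φ(λ)}(û(λ)) = DS_{φ(λ)}(û(λ)) = DJ_{φ(λ)}(û(λ)) = 0 and B_{φ(λ)}(û(λ), û(λ)) < 0; in particular φ(λ) is thermodynamically unstable for all λ ∈ (0, ε). -/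

import Mathlib

open Filter Topology

/-- The second Fréchet derivative of `f : E → ℝ` at `φ`, applied to `u`, `v`. -/
noncomputable def D2 {E : Type*} [NormedAddCommGroup E] [NormedSpace ℝ E]
    (f : E → ℝ) (φ u v : E) : ℝ :=
  fderiv ℝ (fderiv ℝ f) φ u v

/-- `φ` satisfies the first law with temperature `T` and potential `Y` (case `p = 1`,
`X¹ = J` the angular momentum): `DM_φ = T·DS_φ + Y·DJ_φ`. -/
def FirstLawJ {E : Type*} [NormedAddCommGroup E] [NormedSpace ℝ E]
    (M S J : E → ℝ) (φ : E) (T Y : ℝ) : Prop :=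
  fderiv ℝ M φ = T • fderiv ℝ S φ + Y • fderiv ℝ J φ

/-- The canonical bilinear form `B_φ(u,v) = D²M_φ(u,v) − T·D²S_φ(u,v) − Y·D²J_φ(u,v)`. -/
noncomputable def BformJ {E : Type*} [NormedAddCommGroup E] [NormedSpace ℝ E]
    (M S J : E → ℝ) (φ : E) (T Y : ℝ) (u v : E) : ℝ :=
  D2 M φ u v - T * D2 S φ u v - Y * D2 J φ u v

/-! Write `û = φ′ - λ ũ`. Differentiating the first law along the curve gives
`B(φ′, w) = T′ DS(w) + Y′ DJ(w)`, so by symmetry of `B`, and since `DS(û) = DJ(û) = 0`,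
`B(û, û) = λ² B(ũ, ũ) - λ (T′ DS(ũ) + Y′ DJ(ũ)) = λ² B(ũ, ũ) - (T′² / T) c`.
As `c(λ) ≈ c′(0) λ` with `c′(0) > 0` and `T′(0)² / T(0) > 0`, the linear term wins for
small `λ > 0`. -/

section
variable {E : Type*} [NormedAddCommGroup E] [NormedSpace ℝ E]

theorem ContinuousLinearMap.bilinear_apply_sub_smul_self {B : E →L[ℝ] E →L[ℝ] ℝ}
    (hB : ∀ x y, B x y = B y x) {α : E →L[ℝ] ℝ} {v : E} (hv : ∀ w, B v w = α w)
    (u : E) (s : ℝ) :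
    B (v - s • u) (v - s • u) = α (v - s • u) - s * α u + s ^ 2 * B u u := by
  simp only [map_sub, map_smul, sub_apply, smul_apply, smul_eq_mul, hv]
  rw [hB u v, hv]
  ring

variable {M S J : E → ℝ}

theorem BformJ_eq_apply (φ : E) (T Y : ℝ) (u v : E) :
    BformJ M S J φ T Y u v = (fderiv ℝ (fderiv ℝ M) φ - T • fderiv ℝ (fderiv ℝ S) φ -
      Y • fderiv ℝ (fderiv ℝ J) φ) u v := by
  simp [BformJ, D2]

theorem FirstLawJ.fderiv_apply_eq_zero {φ : E} {T Y : ℝ} (h : FirstLawJ M S J φ T Y) {u : E}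
    (hS : fderiv ℝ S φ u = 0) (hJ : fderiv ℝ J φ u = 0) : fderiv ℝ M φ u = 0 := by
  rw [h]
  simp [hS, hJ]

/-- Differentiating the first law along a curve of solutions. -/
theorem BformJ_deriv_left {φ : ℝ → E} {T Y : ℝ → ℝ} {l : ℝ}
    (hfl : ∀ᶠ x in 𝓝 l, FirstLawJ M S J (φ x) (T x) (Y x))
    (hM : DifferentiableAt ℝ (fderiv ℝ M) (φ l)) (hS : DifferentiableAt ℝ (fderiv ℝ S) (φ l))
    (hJ : DifferentiableAt ℝ (fderiv ℝ J) (φ l)) (hφ : DifferentiableAt ℝ φ l)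
    (hT : DifferentiableAt ℝ T l) (hY : DifferentiableAt ℝ Y l) (w : E) :
    BformJ M S J (φ l) (T l) (Y l) (deriv φ l) w =
      deriv T l * fderiv ℝ S (φ l) w + deriv Y l * fderiv ℝ J (φ l) w := by
  have hcomp : ∀ {f : E → ℝ}, DifferentiableAt ℝ (fderiv ℝ f) (φ l) →
      HasDerivAt (fun x => fderiv ℝ f (φ x)) (fderiv ℝ (fderiv ℝ f) (φ l) (deriv φ l)) l :=
    fun hf => hf.hasFDerivAt.comp_hasDerivAt l hφ.hasDerivAt
  have hrhs := (hT.hasDerivAt.smul (hcomp hS)).add (hY.hasDerivAt.smul (hcomp hJ))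
  have hD := congrArg (· w) ((hrhs.congr_of_eventuallyEq hfl).unique (hcomp hM))
  simp only [add_apply, smul_apply, smul_eq_mul] at hD
  simp only [BformJ, D2]
  linarith

theorem BformJ_sub_smul_self {φ : ℝ → E} {T Y : ℝ → ℝ} {l : ℝ}
    (hfl : ∀ᶠ x in 𝓝 l, FirstLawJ M S J (φ x) (T x) (Y x))
    (hM : ContDiffAt ℝ 2 M (φ l)) (hS : ContDiffAt ℝ 2 S (φ l)) (hJ : ContDiffAt ℝ 2 J (φ l))
    (hφ : DifferentiableAt ℝ φ l) (hT : DifferentiableAt ℝ T l) (hY : DifferentiableAt ℝ Y l)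
    (u : E) (s : ℝ) (hS0 : fderiv ℝ S (φ l) (deriv φ l - s • u) = 0)
    (hJ0 : fderiv ℝ J (φ l) (deriv φ l - s • u) = 0) :
    BformJ M S J (φ l) (T l) (Y l) (deriv φ l - s • u) (deriv φ l - s • u) =
      s ^ 2 * BformJ M S J (φ l) (T l) (Y l) u u -
        s * (deriv T l * fderiv ℝ S (φ l) u + deriv Y l * fderiv ℝ J (φ l) u) := by
  have hsymm : ∀ {f : E → ℝ}, ContDiffAt ℝ 2 f (φ l) → IsSymmSndFDerivAt ℝ f (φ l) :=
    fun hf => hf.isSymmSndFDerivAt (by simp)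
  have hdiff : ∀ {f : E → ℝ}, ContDiffAt ℝ 2 f (φ l) →
      DifferentiableAt ℝ (fderiv ℝ f) (φ l) :=
    fun hf => (hf.fderiv_right (m := 1) le_rfl).differentiableAt one_ne_zero
  have key := ContinuousLinearMap.bilinear_apply_sub_smul_self
    (B := fderiv ℝ (fderiv ℝ M) (φ l) - T l • fderiv ℝ (fderiv ℝ S) (φ l) -
      Y l • fderiv ℝ (fderiv ℝ J) (φ l))
    (α := deriv T l • fderiv ℝ S (φ l) + deriv Y l • fderiv ℝ J (φ l))
    (fun x y => by simp only [← BformJ_eq_apply, BformJ, D2, hsymm hM x y, hsymm hS x y,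
      hsymm hJ x y])
    (fun w => by
      rw [← BformJ_eq_apply, BformJ_deriv_left hfl (hdiff hM) (hdiff hS) (hdiff hJ) hφ hT hY w]
      simp) u s
  simp only [← BformJ_eq_apply, add_apply, smul_apply, smul_eq_mul, hS0, hJ0] at key
  linarith

theorem continuous_BformJ_comp (hM : ContDiff ℝ 2 M) (hS : ContDiff ℝ 2 S) (hJ : ContDiff ℝ 2 J)
    {φ u : ℝ → E} {T Y : ℝ → ℝ} (hφ : Continuous φ) (hu : Continuous u) (hT : Continuous T)
    (hY : Continuous Y) :
    Continuous (fun l => BformJ M S J (φ l) (T l) (Y l) (u l) (u l)) := by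
  have hD2 : ∀ {f : E → ℝ}, ContDiff ℝ 2 f → Continuous (fun l => D2 f (φ l) (u l) (u l)) :=
    fun hf => ((((hf.fderiv_right (m := 1) le_rfl).continuous_fderiv one_ne_zero).comp
      hφ).clm_apply hu).clm_apply hu
  exact ((hD2 hM).sub (hT.mul (hD2 hS))).sub (hY.mul (hD2 hJ))

end

theorem eventually_nhdsGT_sq_mul_sub_mul_neg {g k c : ℝ → ℝ} {c' : ℝ} (hg : ContinuousAt g 0)
    (hk : ContinuousAt k 0) (hk0 : 0 < k 0) (hc : HasDerivAt c c' 0) (hc0 : c 0 = 0)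
    (hc' : 0 < c') : ∀ᶠ l in 𝓝[>] 0, l ^ 2 * g l - k l * c l < 0 := by
  have hslope : Tendsto (fun l => c l / l) (𝓝[>] 0) (𝓝 c') := by
    simpa [hc0, div_eq_inv_mul] using hc.tendsto_slope_zero_right
  have hlim : Tendsto (fun l => l * g l - k l * (c l / l)) (𝓝[>] 0) (𝓝 (0 * g 0 - k 0 * c')) :=
    ((continuousAt_id.mul hg).tendsto.mono_left nhdsWithin_le_nhds).sub
      ((hk.tendsto.mono_left nhdsWithin_le_nhds).mul hslope)
  have hneg : 0 * g 0 - k 0 * c' < 0 := by nlinarith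
  filter_upwards [hlim.eventually_lt_const hneg, self_mem_nhdsWithin] with l hl (hpos : 0 < l)
  calc l ^ 2 * g l - k l * c l = l * (l * g l - k l * (c l / l)) := by field_simp
    _ < 0 := mul_neg_of_pos_of_neg hpos hl

theorem instability_on_positive_heat_capacity_side_general
    {E : Type*} [NormedAddCommGroup E] [NormedSpace ℝ E]
    (M S J : E → ℝ)
    (hM : ContDiff ℝ (⊤ : ℕ∞) M) (hS : ContDiff ℝ (⊤ : ℕ∞) S)
    (hJ : ContDiff ℝ (⊤ : ℕ∞) J)
    (φ : ℝ → E) (hφ : ContDiff ℝ (⊤ : ℕ∞) φ)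
    (T Y : ℝ → ℝ) (hT : ContDiff ℝ (⊤ : ℕ∞) T) (hY : ContDiff ℝ (⊤ : ℕ∞) Y)
    (hfl : ∀ l : ℝ, FirstLawJ M S J (φ l) (T l) (Y l))
    (hT0 : 0 < T 0)
    (hJconst : ∀ l : ℝ, deriv (J ∘ φ) l = 0)
    (c : ℝ → ℝ) (hc : ContDiff ℝ 1 c)
    (hheat : ∀ᶠ l in 𝓝 (0 : ℝ), deriv (S ∘ φ) l = c l / T l * deriv T l)
    (hc0 : c 0 = 0) (hT'0 : deriv T 0 ≠ 0) (hc'0 : 0 < deriv c 0)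
    (u' : ℝ → E) (hu'cont : Continuous u')
    (hu' : ∀ᶠ l in 𝓝 (0 : ℝ),
      l * fderiv ℝ S (φ l) (u' l) = deriv (S ∘ φ) l ∧
      l * fderiv ℝ J (φ l) (u' l) = 0) :
    ∃ ε > 0, ∀ l ∈ Set.Ioo (0 : ℝ) ε,
      fderiv ℝ M (φ l) (deriv φ l - l • u' l) = 0 ∧
      fderiv ℝ S (φ l) (deriv φ l - l • u' l) = 0 ∧
      fderiv ℝ J (φ l) (deriv φ l - l • u' l) = 0 ∧
      BformJ M S J (φ l) (T l) (Y l) (deriv φ l - l • u' l) (deriv φ l - l • u' l) < 0 := by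
  have h2 : (2 : WithTop ℕ∞) ≤ ((⊤ : ℕ∞) : WithTop ℕ∞) := WithTop.coe_le_coe.mpr le_top
  have hchain : ∀ {f : E → ℝ}, ContDiff ℝ (⊤ : ℕ∞) f → ∀ l,
      deriv (f ∘ φ) l = fderiv ℝ f (φ l) (deriv φ l) :=
    fun hf l => fderiv_comp_deriv l (hf.differentiable (by simp) _) (hφ.differentiable (by simp) _)
  have hneg := eventually_nhdsGT_sq_mul_sub_mul_neg
    (g := fun l => BformJ M S J (φ l) (T l) (Y l) (u' l) (u' l))
    (k := fun l => deriv T l ^ 2 / T l)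
    (continuous_BformJ_comp (hM.of_le h2) (hS.of_le h2) (hJ.of_le h2) hφ.continuous hu'cont
      hT.continuous hY.continuous).continuousAt
    (((hT.continuous_deriv (by simp)).continuousAt.pow 2).div hT.continuous.continuousAt hT0.ne')
    (by positivity) (hc.differentiable one_ne_zero 0).hasDerivAt hc0 hc'0
  obtain ⟨ε, hε, hsub⟩ := mem_nhdsGT_iff_exists_Ioo_subset.mp
    (hneg.and ((hheat.and hu').filter_mono nhdsWithin_le_nhds))
  refine ⟨ε, hε, fun l hl => ?_⟩
  obtain ⟨hBneg, hheat_l, hSu, hJu⟩ := hsub hl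
  have hS0 : fderiv ℝ S (φ l) (deriv φ l - l • u' l) = 0 := by
    rw [map_sub, map_smul, smul_eq_mul, hSu, hchain hS, sub_self]
  have hJ0 : fderiv ℝ J (φ l) (deriv φ l - l • u' l) = 0 := by
    rw [map_sub, map_smul, smul_eq_mul, hJu, ← hchain hJ, hJconst, sub_self]
  refine ⟨(hfl l).fderiv_apply_eq_zero hS0 hJ0, hS0, hJ0, ?_⟩
  rw [BformJ_sub_smul_self (Eventually.of_forall hfl) ((hM.of_le h2).contDiffAt)
    ((hS.of_le h2).contDiffAt) ((hJ.of_le h2).contDiffAt) (hφ.differentiable (by simp) l)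
    (hT.differentiable (by simp) l) (hY.differentiable (by simp) l) (u' l) l hS0 hJ0]
  linear_combination hBneg - deriv T l * hSu - deriv Y l * hJu - deriv T l * hheat_l

/-- Instability on the side of positive heat capacity at fixed angular
momenta: along a smooth fixed-`J` family of first-law solutions with heat capacity
`c(λ)` satisfying `(S∘φ)′ = (c/T)·T′`, `c(0) = 0`, `T′(0) ≠ 0`, `c′(0) > 0`, the
solutions are thermodynamically unstable on the side `λ ∈ (0, ε)` where `c > 0`. -/
theorem instability_on_positive_heat_capacity_side
    {E : Type*} [NormedAddCommGroup E] [NormedSpace ℝ E] [CompleteSpace E]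
    (M S J : E → ℝ)
    (hM : ContDiff ℝ (⊤ : ℕ∞) M) (hS : ContDiff ℝ (⊤ : ℕ∞) S)
    (hJ : ContDiff ℝ (⊤ : ℕ∞) J)
    (φ : ℝ → E) (hφ : ContDiff ℝ (⊤ : ℕ∞) φ)
    (T Y : ℝ → ℝ) (hT : ContDiff ℝ (⊤ : ℕ∞) T) (hY : ContDiff ℝ (⊤ : ℕ∞) Y)
    (hfl : ∀ l : ℝ, FirstLawJ M S J (φ l) (T l) (Y l))
    (hT0 : 0 < T 0)
    (hJconst : ∀ l : ℝ, deriv (J ∘ φ) l = 0)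
    (c : ℝ → ℝ) (hc : ContDiff ℝ 1 c)
    (hheat : ∀ᶠ l in 𝓝 (0 : ℝ), deriv (S ∘ φ) l = c l / T l * deriv T l)
    (hc0 : c 0 = 0) (hT'0 : deriv T 0 ≠ 0) (hc'0 : 0 < deriv c 0)
    (hφ'0 : deriv φ 0 ≠ 0)
    (u' : ℝ → E) (hu'cont : Continuous u')
    (hu' : ∀ᶠ l in 𝓝 (0 : ℝ),
      l * fderiv ℝ S (φ l) (u' l) = deriv (S ∘ φ) l ∧
      l * fderiv ℝ J (φ l) (u' l) = 0) :
    ∃ ε > 0, ∀ l ∈ Set.Ioo (0 : ℝ) ε,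
      fderiv ℝ M (φ l) (deriv φ l - l • u' l) = 0 ∧
      fderiv ℝ S (φ l) (deriv φ l - l • u' l) = 0 ∧
      fderiv ℝ J (φ l) (deriv φ l - l • u' l) = 0 ∧
      BformJ M S J (φ l) (T l) (Y l) (deriv φ l - l • u' l) (deriv φ l - l • u' l) < 0 :=
  instability_on_positive_heat_capacity_side_general M S J hM hS hJ φ hφ T Y hT hY hfl hT0 hJconst c
    hc hheat hc0 hT'0 hc'0 u' hu'cont hu'
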